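/- arXiv:2505.20440 — 5 statements merged into one kernel-verified Lean document; each statement's English description precedes it below -/
import Mathlib

section
/- Assume ‖ν(z)‖ = 1 for all z ∈ Γ, the flatness hypothesis (Flat) with constant c_ν > 0, and the boundedness hypothesis (Bdd) with constant d > 0. Then for all x, y ∈ Γ with x ≠ y, |p(x,y)| ≤ 1/(4π‖x−y‖³) + 3c_ν²/(4π‖x−y‖), and consequently |p(x,y)| ≤ (1 + 12 c_ν² d²)/(4π ‖x−y‖³). -/
/- Since the normals are unit vectors, the first term of `p` is at most `1/(4π‖x−y‖³)`. Flatness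
makes each factor `ν·(x−y)` of the second term `O(‖x−y‖²)`, so that term is only
`O(‖x−y‖⁻¹)`; on a set of diameter at most `2d` this is in turn `O(d²‖x−y‖⁻³)`. -/

open scoped RealInnerProductSpace
open Real

/-- The second mixed normal derivative of the Laplace fundamental solution:
`p(x,y) = (ν(x)·ν(y))/(4π‖x−y‖³) − 3(ν(y)·(x−y))(ν(x)·(x−y))/(4π‖x−y‖⁵)`. -/
noncomputable def laplaceHyperKernel
    (ν : EuclideanSpace ℝ (Fin 3) → EuclideanSpace ℝ (Fin 3))
    (x y : EuclideanSpace ℝ (Fin 3)) : ℝ :=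
  ⟪ν x, ν y⟫ / (4 * Real.pi * ‖x - y‖ ^ 3)
    - 3 * (⟪ν y, x - y⟫ * ⟪ν x, x - y⟫) / (4 * Real.pi * ‖x - y‖ ^ 5)

theorem abs_real_inner_le_one {E : Type*} [NormedAddCommGroup E] [InnerProductSpace ℝ E]
    {u v : E} (hu : ‖u‖ = 1) (hv : ‖v‖ = 1) : |⟪u, v⟫| ≤ 1 := by
  simpa [hu, hv] using abs_real_inner_le_norm u v

theorem div_mul_le_mul_sq_div_mul_pow_three {a k r ρ : ℝ} (ha : 0 ≤ a) (hk : 0 < k)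
    (hr : 0 < r) (hrρ : r ≤ ρ) : a / (k * r) ≤ a * ρ ^ 2 / (k * r ^ 3) :=
  calc a / (k * r) = a * r ^ 2 / (k * r ^ 3) := by field_simp
    _ ≤ a * ρ ^ 2 / (k * r ^ 3) := by gcongr

theorem abs_laplaceHyperKernel_le {ν : EuclideanSpace ℝ (Fin 3) → EuclideanSpace ℝ (Fin 3)}
    {x y : EuclideanSpace ℝ (Fin 3)} {c : ℝ} (hνx : ‖ν x‖ = 1) (hνy : ‖ν y‖ = 1)
    (hx : |⟪ν x, x - y⟫| ≤ c * ‖x - y‖ ^ 2) (hy : |⟪ν y, x - y⟫| ≤ c * ‖x - y‖ ^ 2)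
    (hxy : x ≠ y) :
    |laplaceHyperKernel ν x y|
      ≤ 1 / (4 * π * ‖x - y‖ ^ 3) + 3 * c ^ 2 / (4 * π * ‖x - y‖) := by
  have hr : 0 < ‖x - y‖ := norm_pos_iff.2 (sub_ne_zero.2 hxy)
  have hcross : |⟪ν y, x - y⟫ * ⟪ν x, x - y⟫| ≤ c ^ 2 * ‖x - y‖ ^ 4 :=
    calc |⟪ν y, x - y⟫ * ⟪ν x, x - y⟫|
        ≤ (c * ‖x - y‖ ^ 2) * (c * ‖x - y‖ ^ 2) := by
          rw [abs_mul]; exact mul_le_mul hy hx (abs_nonneg _) ((abs_nonneg _).trans hy)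
      _ = c ^ 2 * ‖x - y‖ ^ 4 := by ring
  unfold laplaceHyperKernel
  refine (abs_sub _ _).trans (add_le_add ?_ ?_)
  · rw [abs_div, abs_of_nonneg (by positivity : 0 ≤ 4 * π * ‖x - y‖ ^ 3)]
    gcongr
    exact abs_real_inner_le_one hνx hνy
  · calc |3 * (⟪ν y, x - y⟫ * ⟪ν x, x - y⟫) / (4 * π * ‖x - y‖ ^ 5)|
        = 3 * |⟪ν y, x - y⟫ * ⟪ν x, x - y⟫| / (4 * π * ‖x - y‖ ^ 5) := by
          rw [abs_div, abs_mul, abs_of_pos three_pos,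
            abs_of_nonneg (by positivity : 0 ≤ 4 * π * ‖x - y‖ ^ 5)]
      _ ≤ 3 * (c ^ 2 * ‖x - y‖ ^ 4) / (4 * π * ‖x - y‖ ^ 5) := by gcongr
      _ = 3 * c ^ 2 / (4 * π * ‖x - y‖) := by field_simp

theorem kernel_p_bound_general
    (Γ : Set (EuclideanSpace ℝ (Fin 3)))
    (ν : EuclideanSpace ℝ (Fin 3) → EuclideanSpace ℝ (Fin 3))
    (hν : ∀ z ∈ Γ, ‖ν z‖ = 1)
    (c_ν : ℝ)
    (hFlat : ∀ x ∈ Γ, ∀ y ∈ Γ,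
      |⟪ν x, x - y⟫| ≤ c_ν * ‖x - y‖ ^ 2 ∧ |⟪ν y, x - y⟫| ≤ c_ν * ‖x - y‖ ^ 2)
    (d : ℝ)
    (hBdd : ∀ z ∈ Γ, ‖z‖ ≤ d)
    (x y : EuclideanSpace ℝ (Fin 3)) (hx : x ∈ Γ) (hy : y ∈ Γ) (hxy : x ≠ y) :
    |laplaceHyperKernel ν x y|
        ≤ 1 / (4 * Real.pi * ‖x - y‖ ^ 3) + 3 * c_ν ^ 2 / (4 * Real.pi * ‖x - y‖)
    ∧ |laplaceHyperKernel ν x y|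
        ≤ (1 + 12 * c_ν ^ 2 * d ^ 2) / (4 * Real.pi * ‖x - y‖ ^ 3) := by
  obtain ⟨hflat_x, hflat_y⟩ := hFlat x hx y hy
  have hnear := abs_laplaceHyperKernel_le (hν x hx) (hν y hy) hflat_x hflat_y hxy
  refine ⟨hnear, hnear.trans ?_⟩
  have hr : 0 < ‖x - y‖ := norm_pos_iff.2 (sub_ne_zero.2 hxy)
  have hdiam : ‖x - y‖ ≤ 2 * d :=
    (norm_sub_le_of_le (hBdd x hx) (hBdd y hy)).trans_eq (two_mul d).symm
  calc 1 / (4 * π * ‖x - y‖ ^ 3) + 3 * c_ν ^ 2 / (4 * π * ‖x - y‖)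
      ≤ 1 / (4 * π * ‖x - y‖ ^ 3) + 3 * c_ν ^ 2 * (2 * d) ^ 2 / (4 * π * ‖x - y‖ ^ 3) := by
        grw [div_mul_le_mul_sq_div_mul_pow_three (by positivity) (by positivity) hr hdiam]
    _ = (1 + 12 * c_ν ^ 2 * d ^ 2) / (4 * π * ‖x - y‖ ^ 3) := by ring

theorem kernel_p_bound
    (Γ : Set (EuclideanSpace ℝ (Fin 3)))
    (ν : EuclideanSpace ℝ (Fin 3) → EuclideanSpace ℝ (Fin 3))
    (hν : ∀ z ∈ Γ, ‖ν z‖ = 1)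
    (c_ν : ℝ) (hc : 0 < c_ν)
    (hFlat : ∀ x ∈ Γ, ∀ y ∈ Γ,
      |⟪ν x, x - y⟫| ≤ c_ν * ‖x - y‖ ^ 2 ∧ |⟪ν y, x - y⟫| ≤ c_ν * ‖x - y‖ ^ 2)
    (d : ℝ) (hd : 0 < d)
    (hBdd : ∀ z ∈ Γ, ‖z‖ ≤ d)
    (x y : EuclideanSpace ℝ (Fin 3)) (hx : x ∈ Γ) (hy : y ∈ Γ) (hxy : x ≠ y) :
    |laplaceHyperKernel ν x y|
        ≤ 1 / (4 * Real.pi * ‖x - y‖ ^ 3) + 3 * c_ν ^ 2 / (4 * Real.pi * ‖x - y‖)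
    ∧ |laplaceHyperKernel ν x y|
        ≤ (1 + 12 * c_ν ^ 2 * d ^ 2) / (4 * Real.pi * ‖x - y‖ ^ 3) :=
  kernel_p_bound_general Γ ν hν c_ν hFlat d hBdd x y hx hy hxy
end

section
/- Assume ‖ν(z)‖ = 1 for all z ∈ Γ and the Lipschitz hypothesis (Lip) with constant ℓ_ν > 0. Let x₁, x₂, y ∈ Γ with x₁ ≠ y and 2‖x₁ − x₂‖ ≤ ‖x₁ − y‖ (so x₂ ≠ y). Then |(ν(x₁)·ν(y))/‖x₁−y‖³ − (ν(x₂)·ν(y))/‖x₂−y‖³| ≤ ℓ_ν ‖x₁−x₂‖/‖x₁−y‖³ + 48 ‖x₁−x₂‖/‖x₁−y‖⁴. -/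
open scoped RealInnerProductSpace

/-- Factoring `s³ - r³ = (s - r)(r² + rs + s²)` and using `s ≥ r/2` even gives the constant `38`. -/
lemma abs_one_div_pow_three_sub_le {r s d : ℝ} (hr : 0 < r) (hrs : |r - s| ≤ d) (hd : 2 * d ≤ r) :
    |1 / r ^ 3 - 1 / s ^ 3| ≤ 48 * d / r ^ 4 := by
  obtain ⟨hlo, hhi⟩ := abs_le.mp hrs
  have hd₀ : 0 ≤ d := (abs_nonneg _).trans hrs
  have hs_half : r / 2 ≤ s := by linarith
  have hs : 0 < s := by linarith
  have hquad : r ^ 2 + r * s + s ^ 2 ≤ 19 / 4 * r ^ 2 := by nlinarith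
  have hfactor : 1 / r ^ 3 - 1 / s ^ 3 = (s - r) * (r ^ 2 + r * s + s ^ 2) / (r ^ 3 * s ^ 3) := by
    field_simp
    ring
  rw [hfactor, abs_div, abs_mul, abs_sub_comm,
    abs_of_pos (by positivity : 0 < r ^ 2 + r * s + s ^ 2),
    abs_of_pos (by positivity : 0 < r ^ 3 * s ^ 3)]
  calc |r - s| * (r ^ 2 + r * s + s ^ 2) / (r ^ 3 * s ^ 3)
      ≤ d * (19 / 4 * r ^ 2) / (r ^ 3 * (r / 2) ^ 3) := by gcongr
    _ = 38 * d / r ^ 4 := by field_simp; ring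
    _ ≤ 48 * d / r ^ 4 := by gcongr; norm_num

lemma abs_one_div_norm_pow_three_sub_le {E : Type*} [SeminormedAddCommGroup E] {x₁ x₂ y : E}
    (hx₁y : 0 < ‖x₁ - y‖) (h : 2 * ‖x₁ - x₂‖ ≤ ‖x₁ - y‖) :
    |1 / ‖x₁ - y‖ ^ 3 - 1 / ‖x₂ - y‖ ^ 3| ≤ 48 * ‖x₁ - x₂‖ / ‖x₁ - y‖ ^ 4 := by
  refine abs_one_div_pow_three_sub_le hx₁y ?_ h
  simpa using abs_norm_sub_norm_le (x₁ - y) (x₂ - y)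

lemma abs_div_sub_div_le {a b p q : ℝ} (hp : 0 < p) :
    |a / p - b / q| ≤ |a - b| / p + |b| * |1 / p - 1 / q| := by
  calc |a / p - b / q| = |(a - b) / p + b * (1 / p - 1 / q)| := by congr 1; ring
    _ ≤ |(a - b) / p| + |b * (1 / p - 1 / q)| := abs_add_le _ _
    _ = |a - b| / p + |b| * |1 / p - 1 / q| := by rw [abs_div, abs_mul, abs_of_pos hp]

lemma abs_real_inner_sub_inner_le {F : Type*} [SeminormedAddCommGroup F] [InnerProductSpace ℝ F]
    (a b c : F) : |⟪a, c⟫ - ⟪b, c⟫| ≤ ‖a - b‖ * ‖c‖ := by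
  rw [← inner_sub_left]
  exact abs_real_inner_le_norm _ _

theorem kernel_first_summand_difference_bound_general
    (Γ : Set (EuclideanSpace ℝ (Fin 3)))
    (ν : EuclideanSpace ℝ (Fin 3) → EuclideanSpace ℝ (Fin 3))
    (hν : ∀ z ∈ Γ, ‖ν z‖ = 1)
    (ℓ_ν : ℝ)
    (hLip : ∀ x ∈ Γ, ∀ y ∈ Γ, ‖ν x - ν y‖ ≤ ℓ_ν * ‖x - y‖)
    (x₁ x₂ y : EuclideanSpace ℝ (Fin 3))
    (hx₁ : x₁ ∈ Γ) (hx₂ : x₂ ∈ Γ) (hy : y ∈ Γ)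
    (hx₁y : x₁ ≠ y)
    (h : 2 * ‖x₁ - x₂‖ ≤ ‖x₁ - y‖) :
    |⟪ν x₁, ν y⟫ / ‖x₁ - y‖ ^ 3 - ⟪ν x₂, ν y⟫ / ‖x₂ - y‖ ^ 3|
      ≤ ℓ_ν * ‖x₁ - x₂‖ / ‖x₁ - y‖ ^ 3 + 48 * ‖x₁ - x₂‖ / ‖x₁ - y‖ ^ 4 := by
  have hr : 0 < ‖x₁ - y‖ := norm_pos_iff.mpr (sub_ne_zero.mpr hx₁y)
  have hnumerator : |⟪ν x₁, ν y⟫ - ⟪ν x₂, ν y⟫| ≤ ℓ_ν * ‖x₁ - x₂‖ :=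
    calc |⟪ν x₁, ν y⟫ - ⟪ν x₂, ν y⟫| ≤ ‖ν x₁ - ν x₂‖ * ‖ν y‖ := abs_real_inner_sub_inner_le _ _ _
      _ ≤ ℓ_ν * ‖x₁ - x₂‖ := by rw [hν y hy, mul_one]; exact hLip x₁ hx₁ x₂ hx₂
  have hbounded : |⟪ν x₂, ν y⟫| ≤ 1 :=
    calc |⟪ν x₂, ν y⟫| ≤ ‖ν x₂‖ * ‖ν y‖ := abs_real_inner_le_norm _ _
      _ = 1 := by rw [hν x₂ hx₂, hν y hy, mul_one]
  calc _ ≤ |⟪ν x₁, ν y⟫ - ⟪ν x₂, ν y⟫| / ‖x₁ - y‖ ^ 3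
          + |⟪ν x₂, ν y⟫| * |1 / ‖x₁ - y‖ ^ 3 - 1 / ‖x₂ - y‖ ^ 3| :=
        abs_div_sub_div_le (by positivity)
    _ ≤ ℓ_ν * ‖x₁ - x₂‖ / ‖x₁ - y‖ ^ 3 + 1 * (48 * ‖x₁ - x₂‖ / ‖x₁ - y‖ ^ 4) := by
        gcongr
        exact abs_one_div_norm_pow_three_sub_le hr h
    _ = _ := by rw [one_mul]

theorem kernel_first_summand_difference_bound
    (Γ : Set (EuclideanSpace ℝ (Fin 3)))
    (ν : EuclideanSpace ℝ (Fin 3) → EuclideanSpace ℝ (Fin 3))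
    (hν : ∀ z ∈ Γ, ‖ν z‖ = 1)
    (ℓ_ν : ℝ) (hℓ : 0 < ℓ_ν)
    (hLip : ∀ x ∈ Γ, ∀ y ∈ Γ, ‖ν x - ν y‖ ≤ ℓ_ν * ‖x - y‖)
    (x₁ x₂ y : EuclideanSpace ℝ (Fin 3))
    (hx₁ : x₁ ∈ Γ) (hx₂ : x₂ ∈ Γ) (hy : y ∈ Γ)
    (hx₁y : x₁ ≠ y)
    (h : 2 * ‖x₁ - x₂‖ ≤ ‖x₁ - y‖) :
    |⟪ν x₁, ν y⟫ / ‖x₁ - y‖ ^ 3 - ⟪ν x₂, ν y⟫ / ‖x₂ - y‖ ^ 3|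
      ≤ ℓ_ν * ‖x₁ - x₂‖ / ‖x₁ - y‖ ^ 3 + 48 * ‖x₁ - x₂‖ / ‖x₁ - y‖ ^ 4 :=
  kernel_first_summand_difference_bound_general Γ ν hν ℓ_ν hLip x₁ x₂ y hx₁ hx₂ hy hx₁y h
end

section
/- Assume ‖ν(z)‖ = 1 for all z ∈ Γ, the Lipschitz hypothesis (Lip) with constant ℓ_ν > 0, the flatness hypothesis (Flat) with constant c_ν > 0, and the boundedness hypothesis (Bdd) with constant d > 0. Let x₁, x₂, y ∈ Γ satisfy 2‖x₁ − x₂‖ ≤ ‖x₁ − y‖. Then |(ν(y)·(x₁−y))(ν(x₁)·(x₁−y)) − (ν(y)·(x₂−y))(ν(x₂)·(x₂−y))| ≤ c_ν (4 + 2 d ℓ_ν) ‖x₁ − x₂‖ ‖x₁ − y‖². -/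
open scoped RealInnerProductSpace

theorem kernel_second_summand_numerator_difference_bound
    (Γ : Set (EuclideanSpace ℝ (Fin 3)))
    (ν : EuclideanSpace ℝ (Fin 3) → EuclideanSpace ℝ (Fin 3))
    (hν : ∀ z ∈ Γ, ‖ν z‖ = 1)
    (ℓ_ν : ℝ) (hℓ : 0 < ℓ_ν)
    (hLip : ∀ x ∈ Γ, ∀ y ∈ Γ, ‖ν x - ν y‖ ≤ ℓ_ν * ‖x - y‖)
    (c_ν : ℝ) (hc : 0 < c_ν)
    (hFlat : ∀ x ∈ Γ, ∀ y ∈ Γ,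
      |⟪ν x, x - y⟫| ≤ c_ν * ‖x - y‖ ^ 2 ∧ |⟪ν y, x - y⟫| ≤ c_ν * ‖x - y‖ ^ 2)
    (d : ℝ) (hd : 0 < d)
    (hBdd : ∀ z ∈ Γ, ‖z‖ ≤ d)
    (x₁ x₂ y : EuclideanSpace ℝ (Fin 3))
    (hx₁ : x₁ ∈ Γ) (hx₂ : x₂ ∈ Γ) (hy : y ∈ Γ)
    (h : 2 * ‖x₁ - x₂‖ ≤ ‖x₁ - y‖) :
    |⟪ν y, x₁ - y⟫ * ⟪ν x₁, x₁ - y⟫ - ⟪ν y, x₂ - y⟫ * ⟪ν x₂, x₂ - y⟫|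
      ≤ c_ν * (4 + 2 * d * ℓ_ν) * ‖x₁ - x₂‖ * ‖x₁ - y‖ ^ 2 := by
  have key : ⟪ν y, x₁ - y⟫ * ⟪ν x₁, x₁ - y⟫ - ⟪ν y, x₂ - y⟫ * ⟪ν x₂, x₂ - y⟫ =
      ⟪ν y, x₁ - y⟫ * (⟪ν x₁ - ν x₂, x₁ - y⟫ + ⟪ν x₂, x₁ - x₂⟫)
        + ⟪ν y, x₁ - x₂⟫ * ⟪ν x₂, x₂ - y⟫ := by
    simp [inner_sub_left, inner_sub_right]; ring
  have hA : |⟪ν y, x₁ - y⟫| ≤ c_ν * ‖x₁ - y‖ ^ 2 := (hFlat x₁ hx₁ y hy).2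
  have hAs : |⟪ν y, x₁ - y⟫| ≤ ‖x₁ - y‖ := by
    have := abs_real_inner_le_norm (ν y) (x₁ - y)
    rwa [hν y hy, one_mul] at this
  have hB' : |⟪ν x₂, x₂ - y⟫| ≤ c_ν * ‖x₂ - y‖ ^ 2 := (hFlat x₂ hx₂ y hy).1
  have h12 : |⟪ν x₂, x₁ - x₂⟫| ≤ c_ν * ‖x₁ - x₂‖ ^ 2 := (hFlat x₁ hx₁ x₂ hx₂).2
  have hAA' : |⟪ν y, x₁ - x₂⟫| ≤ ‖x₁ - x₂‖ := by
    have := abs_real_inner_le_norm (ν y) (x₁ - x₂)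
    rwa [hν y hy, one_mul] at this
  have hcross : |⟪ν x₁ - ν x₂, x₁ - y⟫| ≤ ℓ_ν * ‖x₁ - x₂‖ * ‖x₁ - y‖ := by
    calc |⟪ν x₁ - ν x₂, x₁ - y⟫| ≤ ‖ν x₁ - ν x₂‖ * ‖x₁ - y‖ :=
          abs_real_inner_le_norm _ _
      _ ≤ ℓ_ν * ‖x₁ - x₂‖ * ‖x₁ - y‖ := by
          gcongr; exact hLip x₁ hx₁ x₂ hx₂
  have htri : ‖x₂ - y‖ ≤ ‖x₁ - y‖ + ‖x₁ - x₂‖ := by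
    calc ‖x₂ - y‖ = ‖(x₂ - x₁) + (x₁ - y)‖ := by abel_nf
      _ ≤ ‖x₂ - x₁‖ + ‖x₁ - y‖ := norm_add_le _ _
      _ = ‖x₁ - y‖ + ‖x₁ - x₂‖ := by rw [norm_sub_rev]; ring
  have hs2d : ‖x₁ - y‖ ≤ 2 * d := by
    calc ‖x₁ - y‖ ≤ ‖x₁‖ + ‖y‖ := norm_sub_le _ _
      _ ≤ 2 * d := by have := hBdd x₁ hx₁; have := hBdd y hy; linarith
  have hr : (0:ℝ) ≤ ‖x₁ - x₂‖ := norm_nonneg _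
  have hs : (0:ℝ) ≤ ‖x₁ - y‖ := norm_nonneg _
  have ht : (0:ℝ) ≤ ‖x₂ - y‖ := norm_nonneg _
  have habs : |⟪ν y, x₁ - y⟫ * ⟪ν x₁, x₁ - y⟫ - ⟪ν y, x₂ - y⟫ * ⟪ν x₂, x₂ - y⟫|
      ≤ |⟪ν y, x₁ - y⟫| * (|⟪ν x₁ - ν x₂, x₁ - y⟫| + |⟪ν x₂, x₁ - x₂⟫|)
        + |⟪ν y, x₁ - x₂⟫| * |⟪ν x₂, x₂ - y⟫| := by
    rw [key]
    calc _ ≤ |⟪ν y, x₁ - y⟫ * (⟪ν x₁ - ν x₂, x₁ - y⟫ + ⟪ν x₂, x₁ - x₂⟫)|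
          + |⟪ν y, x₁ - x₂⟫ * ⟪ν x₂, x₂ - y⟫| := abs_add_le _ _
      _ ≤ _ := by
        rw [abs_mul, abs_mul]
        gcongr
        exact abs_add_le _ _
  refine habs.trans ?_
  have hP1 : |⟪ν y, x₁ - y⟫| * (|⟪ν x₁ - ν x₂, x₁ - y⟫| + |⟪ν x₂, x₁ - x₂⟫|)
      ≤ c_ν * (2 * d * ℓ_ν + 1/2) * ‖x₁ - x₂‖ * ‖x₁ - y‖ ^ 2 := by
    have h1 : |⟪ν y, x₁ - y⟫| * |⟪ν x₁ - ν x₂, x₁ - y⟫|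
        ≤ (c_ν * ‖x₁ - y‖ ^ 2) * (ℓ_ν * ‖x₁ - x₂‖ * ‖x₁ - y‖) :=
      mul_le_mul hA hcross (abs_nonneg _) (by positivity)
    have h2 : |⟪ν y, x₁ - y⟫| * |⟪ν x₂, x₁ - x₂⟫|
        ≤ ‖x₁ - y‖ * (c_ν * ‖x₁ - x₂‖ ^ 2) :=
      mul_le_mul hAs h12 (abs_nonneg _) hs
    have k1 : (0:ℝ) ≤ c_ν * ℓ_ν * ‖x₁ - x₂‖ * ‖x₁ - y‖ ^ 2 := by positivity
    have k2 : (0:ℝ) ≤ c_ν * ‖x₁ - x₂‖ * ‖x₁ - y‖ := by positivity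
    have e1 := mul_le_mul_of_nonneg_left hs2d k1
    have e2 := mul_le_mul_of_nonneg_left h k2
    have expand : |⟪ν y, x₁ - y⟫| * (|⟪ν x₁ - ν x₂, x₁ - y⟫| + |⟪ν x₂, x₁ - x₂⟫|)
        = |⟪ν y, x₁ - y⟫| * |⟪ν x₁ - ν x₂, x₁ - y⟫|
          + |⟪ν y, x₁ - y⟫| * |⟪ν x₂, x₁ - x₂⟫| := by ring
    rw [expand]
    linarith
  have hP2 : |⟪ν y, x₁ - x₂⟫| * |⟪ν x₂, x₂ - y⟫|
      ≤ c_ν * (9/4) * ‖x₁ - x₂‖ * ‖x₁ - y‖ ^ 2 := by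
    have h1 : |⟪ν y, x₁ - x₂⟫| * |⟪ν x₂, x₂ - y⟫| ≤ ‖x₁ - x₂‖ * (c_ν * ‖x₂ - y‖ ^ 2) :=
      mul_le_mul hAA' hB' (abs_nonneg _) hr
    have ht32 : ‖x₂ - y‖ ≤ (3/2) * ‖x₁ - y‖ := by linarith
    have ht2 : ‖x₂ - y‖ * ‖x₂ - y‖ ≤ ((3/2) * ‖x₁ - y‖) * ((3/2) * ‖x₁ - y‖) :=
      mul_le_mul ht32 ht32 ht (by linarith)
    have k : (0:ℝ) ≤ c_ν * ‖x₁ - x₂‖ := mul_nonneg hc.le hr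
    have e := mul_le_mul_of_nonneg_left ht2 k
    have esq : ‖x₂ - y‖ ^ 2 = ‖x₂ - y‖ * ‖x₂ - y‖ := sq (‖x₂ - y‖) ▸ rfl
    nlinarith [e]
  have hfin : c_ν * (2 * d * ℓ_ν + 1/2) * ‖x₁ - x₂‖ * ‖x₁ - y‖ ^ 2
      + c_ν * (9/4) * ‖x₁ - x₂‖ * ‖x₁ - y‖ ^ 2
      ≤ c_ν * (4 + 2 * d * ℓ_ν) * ‖x₁ - x₂‖ * ‖x₁ - y‖ ^ 2 := by
    have heq : c_ν * (4 + 2 * d * ℓ_ν) * ‖x₁ - x₂‖ * ‖x₁ - y‖ ^ 2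
        = c_ν * (2 * d * ℓ_ν + 1/2) * ‖x₁ - x₂‖ * ‖x₁ - y‖ ^ 2
          + c_ν * (9/4) * ‖x₁ - x₂‖ * ‖x₁ - y‖ ^ 2
          + (5/4) * (c_ν * (‖x₁ - x₂‖ * ‖x₁ - y‖ ^ 2)) := by ring
    have hpos : 0 ≤ (5/4) * (c_ν * (‖x₁ - x₂‖ * ‖x₁ - y‖ ^ 2)) := by positivity
    linarith
  linarith [hP1, hP2]
end

section
/- Assume the flatness hypothesis (Flat) with constant c_ν > 0. Let x₁, x₂, y ∈ Γ with x₁ ≠ y and 2‖x₁ − x₂‖ ≤ ‖x₁ − y‖ (so x₂ ≠ y). Then |ν(y)·(x₂−y)| · |ν(x₂)·(x₂−y)| · |‖x₁−y‖⁻⁵ − ‖x₂−y‖⁻⁵| ≤ 1620 c_ν² ‖x₁ − x₂‖ / ‖x₁ − y‖². -/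
open scoped RealInnerProductSpace

/-!
Both inner products are at most `c_ν ‖x₂ - y‖²` by flatness. Both distances lie in
`[‖x₁ - y‖ / 2, ∞)`, where `t ↦ t⁻⁵` is `5 (‖x₁ - y‖ / 2)⁻⁶`-Lipschitz, and
`‖x₂ - y‖ ≤ (3/2) ‖x₁ - y‖`; hence `1620 = 5 · 2⁶ · (3/2)⁴`.
-/

theorem abs_inv_pow_sub_inv_pow_le {α : Type*} [Field α] [LinearOrder α] [IsStrictOrderedRing α]
    {m a b : α} (hm : 0 < m) (ha : m ≤ a) (hb : m ≤ b) (n : ℕ) :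
    |(a ^ n)⁻¹ - (b ^ n)⁻¹| ≤ n * |a - b| / m ^ (n + 1) := by
  have ha₀ : 0 < a := hm.trans_le ha
  have hb₀ : 0 < b := hm.trans_le hb
  have hinv : |a⁻¹ - b⁻¹| ≤ |a - b| / m ^ 2 := by
    rw [inv_sub_inv ha₀.ne' hb₀.ne', abs_div, abs_sub_comm, abs_of_pos (mul_pos ha₀ hb₀), sq]
    gcongr
  have hmax : max |a⁻¹| |b⁻¹| ≤ m⁻¹ := by
    rw [abs_of_pos (inv_pos.2 ha₀), abs_of_pos (inv_pos.2 hb₀)]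
    exact max_le (inv_anti₀ hm ha) (inv_anti₀ hm hb)
  calc |(a ^ n)⁻¹ - (b ^ n)⁻¹| = |a⁻¹ ^ n - b⁻¹ ^ n| := by rw [inv_pow, inv_pow]
    _ ≤ |a⁻¹ - b⁻¹| * n * max |a⁻¹| |b⁻¹| ^ (n - 1) := abs_pow_sub_pow_le ..
    _ ≤ |a - b| / m ^ 2 * n * m⁻¹ ^ (n - 1) := by gcongr
    _ = n * |a - b| / m ^ (n + 1) := by
      rcases n with _ | n
      · simp
      · rw [Nat.add_sub_cancel, inv_pow]
        field_simp
        ring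

section Triangle

variable {E : Type*} [SeminormedAddCommGroup E] {x₁ x₂ y : E}

theorem half_norm_sub_le_norm_sub_of_two_mul_norm_sub_le (h : 2 * ‖x₁ - x₂‖ ≤ ‖x₁ - y‖) :
    ‖x₁ - y‖ / 2 ≤ ‖x₂ - y‖ := by
  linarith [norm_sub_le_norm_sub_add_norm_sub x₁ x₂ y]

theorem norm_sub_le_three_halves_mul_of_two_mul_norm_sub_le (h : 2 * ‖x₁ - x₂‖ ≤ ‖x₁ - y‖) :
    ‖x₂ - y‖ ≤ 3 / 2 * ‖x₁ - y‖ := by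
  linarith [norm_sub_le_norm_sub_add_norm_sub x₂ x₁ y, norm_sub_rev x₂ x₁]

theorem abs_inv_norm_sub_pow_sub_le (hpos : 0 < ‖x₁ - y‖) (h : 2 * ‖x₁ - x₂‖ ≤ ‖x₁ - y‖)
    (n : ℕ) :
    |(‖x₁ - y‖ ^ n)⁻¹ - (‖x₂ - y‖ ^ n)⁻¹| ≤ n * 2 ^ (n + 1) * ‖x₁ - x₂‖ / ‖x₁ - y‖ ^ (n + 1) := by
  have hdiff : |‖x₁ - y‖ - ‖x₂ - y‖| ≤ ‖x₁ - x₂‖ := by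
    simpa only [sub_sub_sub_cancel_right] using abs_norm_sub_norm_le (x₁ - y) (x₂ - y)
  calc |(‖x₁ - y‖ ^ n)⁻¹ - (‖x₂ - y‖ ^ n)⁻¹|
      ≤ n * |‖x₁ - y‖ - ‖x₂ - y‖| / (‖x₁ - y‖ / 2) ^ (n + 1) :=
        abs_inv_pow_sub_inv_pow_le (by positivity) (by linarith)
          (half_norm_sub_le_norm_sub_of_two_mul_norm_sub_le h) n
    _ ≤ n * ‖x₁ - x₂‖ / (‖x₁ - y‖ / 2) ^ (n + 1) := by gcongr
    _ = n * 2 ^ (n + 1) * ‖x₁ - x₂‖ / ‖x₁ - y‖ ^ (n + 1) := by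
      rw [div_pow]
      field_simp

end Triangle

theorem kernel_second_summand_tail_difference_bound_general
    (Γ : Set (EuclideanSpace ℝ (Fin 3)))
    (ν : EuclideanSpace ℝ (Fin 3) → EuclideanSpace ℝ (Fin 3))
    (c_ν : ℝ)
    (hFlat : ∀ x ∈ Γ, ∀ y ∈ Γ,
      |⟪ν x, x - y⟫| ≤ c_ν * ‖x - y‖ ^ 2 ∧ |⟪ν y, x - y⟫| ≤ c_ν * ‖x - y‖ ^ 2)
    (x₁ x₂ y : EuclideanSpace ℝ (Fin 3))
    (hx₂ : x₂ ∈ Γ) (hy : y ∈ Γ)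
    (hx₁y : x₁ ≠ y)
    (h : 2 * ‖x₁ - x₂‖ ≤ ‖x₁ - y‖) :
    |⟪ν y, x₂ - y⟫| * |⟪ν x₂, x₂ - y⟫| * |(‖x₁ - y‖ ^ 5)⁻¹ - (‖x₂ - y‖ ^ 5)⁻¹|
      ≤ 1620 * c_ν ^ 2 * ‖x₁ - x₂‖ / ‖x₁ - y‖ ^ 2 := by
  have hpos : 0 < ‖x₁ - y‖ := norm_pos_iff.2 (sub_ne_zero.2 hx₁y)
  obtain ⟨hν₂, hνy⟩ := hFlat x₂ hx₂ y hy
  calc |⟪ν y, x₂ - y⟫| * |⟪ν x₂, x₂ - y⟫| * |(‖x₁ - y‖ ^ 5)⁻¹ - (‖x₂ - y‖ ^ 5)⁻¹|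
      ≤ c_ν * ‖x₂ - y‖ ^ 2 * (c_ν * ‖x₂ - y‖ ^ 2) *
          (5 * 2 ^ 6 * ‖x₁ - x₂‖ / ‖x₁ - y‖ ^ 6) := by
        have hcb : 0 ≤ c_ν * ‖x₂ - y‖ ^ 2 := (abs_nonneg _).trans hνy
        refine mul_le_mul (mul_le_mul hνy hν₂ (abs_nonneg _) hcb) ?_ (abs_nonneg _)
          (mul_nonneg hcb hcb)
        exact_mod_cast abs_inv_norm_sub_pow_sub_le hpos h 5
    _ = c_ν ^ 2 * ‖x₂ - y‖ ^ 4 * (320 * ‖x₁ - x₂‖ / ‖x₁ - y‖ ^ 6) := by ring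
    _ ≤ c_ν ^ 2 * (3 / 2 * ‖x₁ - y‖) ^ 4 * (320 * ‖x₁ - x₂‖ / ‖x₁ - y‖ ^ 6) := by
        gcongr
        exact norm_sub_le_three_halves_mul_of_two_mul_norm_sub_le h
    _ = 1620 * c_ν ^ 2 * ‖x₁ - x₂‖ / ‖x₁ - y‖ ^ 2 := by
        field_simp
        ring

theorem kernel_second_summand_tail_difference_bound
    (Γ : Set (EuclideanSpace ℝ (Fin 3)))
    (ν : EuclideanSpace ℝ (Fin 3) → EuclideanSpace ℝ (Fin 3))
    (c_ν : ℝ) (hc : 0 < c_ν)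
    (hFlat : ∀ x ∈ Γ, ∀ y ∈ Γ,
      |⟪ν x, x - y⟫| ≤ c_ν * ‖x - y‖ ^ 2 ∧ |⟪ν y, x - y⟫| ≤ c_ν * ‖x - y‖ ^ 2)
    (x₁ x₂ y : EuclideanSpace ℝ (Fin 3))
    (hx₁ : x₁ ∈ Γ) (hx₂ : x₂ ∈ Γ) (hy : y ∈ Γ)
    (hx₁y : x₁ ≠ y)
    (h : 2 * ‖x₁ - x₂‖ ≤ ‖x₁ - y‖) :
    |⟪ν y, x₂ - y⟫| * |⟪ν x₂, x₂ - y⟫| * |(‖x₁ - y‖ ^ 5)⁻¹ - (‖x₂ - y‖ ^ 5)⁻¹|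
      ≤ 1620 * c_ν ^ 2 * ‖x₁ - x₂‖ / ‖x₁ - y‖ ^ 2 :=
  kernel_second_summand_tail_difference_bound_general Γ ν c_ν hFlat x₁ x₂ y hx₂ hy hx₁y h
end

section
/- Assume ‖ν(z)‖ = 1 for all z ∈ Γ, the Lipschitz hypothesis (Lip) with constant ℓ_ν > 0, the flatness hypothesis (Flat) with constant c_ν > 0, and the boundedness hypothesis (Bdd) with constant d > 0. Then there exists a constant C > 0 (depending only on ℓ_ν, c_ν and d) such that for all x₁, x₂, y ∈ Γ with x₁ ≠ y and 2‖x₁ − x₂‖ ≤ ‖x₁ − y‖, |p(x₁,y) − p(x₂,y)| ≤ C ‖x₁ − x₂‖ / ‖x₁ − y‖⁴. -/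
open scoped RealInnerProductSpace

set_option maxHeartbeats 1000000 in
theorem kernel_p_difference_bound
    (Γ : Set (EuclideanSpace ℝ (Fin 3)))
    (ν : EuclideanSpace ℝ (Fin 3) → EuclideanSpace ℝ (Fin 3))
    (hν : ∀ z ∈ Γ, ‖ν z‖ = 1)
    (ℓ_ν : ℝ) (hℓ : 0 < ℓ_ν)
    (hLip : ∀ x ∈ Γ, ∀ y ∈ Γ, ‖ν x - ν y‖ ≤ ℓ_ν * ‖x - y‖)
    (c_ν : ℝ) (hc : 0 < c_ν)
    (hFlat : ∀ x ∈ Γ, ∀ y ∈ Γ,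
      |⟪ν x, x - y⟫| ≤ c_ν * ‖x - y‖ ^ 2 ∧ |⟪ν y, x - y⟫| ≤ c_ν * ‖x - y‖ ^ 2)
    (d : ℝ) (hd : 0 < d)
    (hBdd : ∀ z ∈ Γ, ‖z‖ ≤ d) :
    ∃ C > (0 : ℝ), ∀ x₁ ∈ Γ, ∀ x₂ ∈ Γ, ∀ y ∈ Γ,
      x₁ ≠ y → 2 * ‖x₁ - x₂‖ ≤ ‖x₁ - y‖ →
      |laplaceHyperKernel ν x₁ y - laplaceHyperKernel ν x₂ y|
        ≤ C * ‖x₁ - x₂‖ / ‖x₁ - y‖ ^ 4 := by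
  refine ⟨2*d*ℓ_ν + 38 + 3*((13/2)*c_ν*d + 9*c_ν*ℓ_ν*d^2 + (17091/2)*c_ν^2*d^2),
    by positivity, ?_⟩
  intro x₁ hx₁ x₂ hx₂ y hy hxy hsep
  have hπ : (0:ℝ) < Real.pi := Real.pi_pos
  set r := ‖x₁ - y‖ with hrdef
  set s := ‖x₂ - y‖ with hsdef
  set h := ‖x₁ - x₂‖ with hhdef
  have hr : 0 < r := norm_sub_pos_iff.mpr hxy
  have hh : 0 ≤ h := norm_nonneg _
  have hh2 : h ≤ r/2 := by linarith
  have hrd : r ≤ 2*d := by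
    have := norm_sub_le x₁ y
    have h1 := hBdd x₁ hx₁
    have h2 := hBdd y hy
    linarith
  have hsr : |s - r| ≤ h := by
    have h1 := abs_norm_sub_norm_le (x₂ - y) (x₁ - y)
    have h2 : (x₂ - y) - (x₁ - y) = -(x₁ - x₂) := by abel
    rw [h2, norm_neg] at h1
    exact h1
  have hνy : ‖ν y‖ = 1 := hν y hy
  have hνx1 : ‖ν x₁‖ = 1 := hν x₁ hx₁
  have hνx2 : ‖ν x₂‖ = 1 := hν x₂ hx₂
  set A₁ := ⟪ν x₁, ν y⟫ with hA1def
  set A₂ := ⟪ν x₂, ν y⟫ with hA2def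
  set B₁ := ⟪ν y, x₁ - y⟫ * ⟪ν x₁, x₁ - y⟫ with hB1def
  set B₂ := ⟪ν y, x₂ - y⟫ * ⟪ν x₂, x₂ - y⟫ with hB2def
  -- basic bounds
  have hA2b : |A₂| ≤ 1 := by
    have := abs_real_inner_le_norm (ν x₂) (ν y)
    rw [hνx2, hνy] at this; simpa using this
  have hA12 : |A₁ - A₂| ≤ ℓ_ν * h := by
    have e : A₁ - A₂ = ⟪ν x₁ - ν x₂, ν y⟫ := by
      rw [hA1def, hA2def, inner_sub_left]
    rw [e]
    calc |⟪ν x₁ - ν x₂, ν y⟫| ≤ ‖ν x₁ - ν x₂‖ * ‖ν y‖ := abs_real_inner_le_norm _ _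
      _ = ‖ν x₁ - ν x₂‖ := by rw [hνy, mul_one]
      _ ≤ ℓ_ν * h := hLip x₁ hx₁ x₂ hx₂
  have hF1 : |⟪ν x₁, x₁ - y⟫| ≤ c_ν * r^2 := (hFlat x₁ hx₁ y hy).1
  have hF2 : |⟪ν x₂, x₂ - y⟫| ≤ c_ν * s^2 := (hFlat x₂ hx₂ y hy).1
  have hF2' : |⟪ν y, x₂ - y⟫| ≤ c_ν * s^2 := (hFlat x₂ hx₂ y hy).2
  have hd1 : |⟪ν y, x₁ - x₂⟫| ≤ h := by
    have := abs_real_inner_le_norm (ν y) (x₁ - x₂)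
    rw [hνy, one_mul] at this; exact this
  have hd3 : |⟪ν x₂, x₁ - x₂⟫| ≤ h := by
    have := abs_real_inner_le_norm (ν x₂) (x₁ - x₂)
    rw [hνx2, one_mul] at this; exact this
  have hd2 : |⟪ν x₁ - ν x₂, x₁ - y⟫| ≤ ℓ_ν * h * r := by
    calc |⟪ν x₁ - ν x₂, x₁ - y⟫| ≤ ‖ν x₁ - ν x₂‖ * ‖x₁ - y‖ := abs_real_inner_le_norm _ _
      _ ≤ (ℓ_ν * h) * r := by
          apply mul_le_mul_of_nonneg_right (hLip x₁ hx₁ x₂ hx₂) (norm_nonneg _)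
      _ = ℓ_ν * h * r := by ring
  have hBd : |B₁ - B₂| ≤ h * (c_ν * r^2)
      + (c_ν * s^2) * (ℓ_ν * h * r + h) := by
    have keyB : B₁ - B₂ = ⟪ν y, x₁ - x₂⟫ * ⟪ν x₁, x₁ - y⟫
        + ⟪ν y, x₂ - y⟫ * (⟪ν x₁ - ν x₂, x₁ - y⟫ + ⟪ν x₂, x₁ - x₂⟫) := by
      have h12 : x₁ - x₂ = (x₁ - y) - (x₂ - y) := by abel
      rw [hB1def, hB2def, h12]
      simp only [inner_sub_left, inner_sub_right]
      ring
    rw [keyB]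
    calc |⟪ν y, x₁ - x₂⟫ * ⟪ν x₁, x₁ - y⟫
        + ⟪ν y, x₂ - y⟫ * (⟪ν x₁ - ν x₂, x₁ - y⟫ + ⟪ν x₂, x₁ - x₂⟫)|
        ≤ |⟪ν y, x₁ - x₂⟫| * |⟪ν x₁, x₁ - y⟫|
          + |⟪ν y, x₂ - y⟫| * (|⟪ν x₁ - ν x₂, x₁ - y⟫| + |⟪ν x₂, x₁ - x₂⟫|) := by
          refine (abs_add_le _ _).trans ?_
          rw [abs_mul, abs_mul]
          gcongr
          exact abs_add_le _ _

      _ ≤ h * (c_ν * r^2) + (c_ν * s^2) * (ℓ_ν * h * r + h) := by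
          gcongr
  have hB2b : |B₂| ≤ c_ν^2 * s^4 := by
    rw [hB2def, abs_mul]
    calc |⟪ν y, x₂ - y⟫| * |⟪ν x₂, x₂ - y⟫| ≤ (c_ν * s^2) * (c_ν * s^2) := by
          apply mul_le_mul hF2' hF2 (abs_nonneg _) (by positivity)
      _ = c_ν^2 * s^4 := by ring
  have hexp : laplaceHyperKernel ν x₁ y - laplaceHyperKernel ν x₂ y
      = (1/(4*Real.pi)) * ((A₁/r^3 - A₂/s^3) - 3*(B₁/r^5 - B₂/s^5)) := by
    have hs00 : 0 < s := by
      have := abs_le.mp hsr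
      linarith [this.1]
    unfold laplaceHyperKernel
    rw [← hrdef, ← hsdef, ← hA1def, ← hA2def, ← hB1def, ← hB2def]
    field_simp
    ring
  rw [hexp]
  clear_value r s h A₁ A₂ B₁ B₂
  clear hrdef hsdef hhdef hA1def hA2def hB1def hB2def hsep hexp
  clear hν hLip hFlat hBdd hνy hνx1 hνx2 hxy hF1 hF2 hF2' hd1 hd2 hd3 hx₁ hx₂ hy
  clear x₁ x₂ y ν Γ
  have hs1 : r/2 ≤ s := by
    have := abs_le.mp hsr
    linarith [this.1]
  have hs2 : s ≤ 3/2*r := by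
    have := abs_le.mp hsr
    linarith [this.2]
  have hs0 : 0 < s := by linarith
  -- bound 1
  have bound1 : |A₁/r^3 - A₂/s^3| ≤ (2*d*ℓ_ν + 38)*h/r^4 := by
    have e : A₁/r^3 - A₂/s^3 = (A₁-A₂)/r^3 + A₂*((s^3-r^3)/(r^3*s^3)) := by
      field_simp; ring
    have h3 : |s^3 - r^3| ≤ (19/4)*h*r^2 := by
      have e3 : s^3 - r^3 = (s-r)*(s^2+s*r+r^2) := by ring
      rw [e3, abs_mul, abs_of_nonneg (by positivity : (0:ℝ) ≤ s^2+s*r+r^2)]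
      calc |s-r| * (s^2+s*r+r^2) ≤ h * ((19/4)*r^2) := by
            apply mul_le_mul hsr (by nlinarith) (by positivity) hh
        _ = (19/4)*h*r^2 := by ring
    have hden : r^6/8 ≤ r^3*s^3 := by
      have : (r/2)^3 ≤ s^3 := pow_le_pow_left₀ (by positivity) hs1 3
      nlinarith [pow_pos hr 3]
    calc |A₁/r^3 - A₂/s^3| = |(A₁-A₂)/r^3 + A₂*((s^3-r^3)/(r^3*s^3))| := by rw [e]
      _ ≤ |(A₁-A₂)/r^3| + |A₂*((s^3-r^3)/(r^3*s^3))| := abs_add_le _ _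
      _ = |A₁-A₂|/r^3 + |A₂| * (|s^3-r^3|/(r^3*s^3)) := by
          rw [abs_div, abs_mul, abs_div,
            abs_of_pos (by positivity : (0:ℝ) < r^3),
            abs_of_pos (by positivity : (0:ℝ) < r^3*s^3)]
      _ ≤ (ℓ_ν*h)/r^3 + 1*(((19/4)*h*r^2)/(r^6/8)) := by
          gcongr
      _ = (ℓ_ν*h*r)/r^4 + 38*h/r^4 := by
          field_simp; ring
      _ ≤ (2*d*ℓ_ν*h)/r^4 + 38*h/r^4 := by
          gcongr ?_/r^4 + 38*h/r^4
          nlinarith [mul_nonneg hℓ.le hh]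
      _ = (2*d*ℓ_ν + 38)*h/r^4 := by ring
  -- bound 2
  have h5 : |s^5 - r^5| ≤ (211/16)*h*r^4 := by
    have e5 : s^5 - r^5 = (s-r)*(s^4+s^3*r+s^2*r^2+s*r^3+r^4) := by ring
    have p4 : s^4 ≤ (3/2*r)^4 := pow_le_pow_left₀ hs0.le hs2 4
    have p3 : s^3 ≤ (3/2*r)^3 := pow_le_pow_left₀ hs0.le hs2 3
    have p2 : s^2 ≤ (3/2*r)^2 := pow_le_pow_left₀ hs0.le hs2 2
    rw [e5, abs_mul, abs_of_nonneg (by positivity : (0:ℝ) ≤ s^4+s^3*r+s^2*r^2+s*r^3+r^4)]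
    calc |s-r| * (s^4+s^3*r+s^2*r^2+s*r^3+r^4) ≤ h * ((211/16)*r^4) := by
          apply mul_le_mul hsr (by nlinarith [mul_le_mul_of_nonneg_right p3 hr.le,
            mul_le_mul_of_nonneg_right p2 (by positivity : (0:ℝ) ≤ r^2),
            mul_le_mul_of_nonneg_right hs2 (by positivity : (0:ℝ) ≤ r^3)])
            (by positivity) hh
      _ = (211/16)*h*r^4 := by ring
  have hden5 : r^10/32 ≤ r^5*s^5 := by
    have : (r/2)^5 ≤ s^5 := pow_le_pow_left₀ (by positivity) hs1 5
    nlinarith [pow_pos hr 5]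
  have bound2 : |B₁/r^5 - B₂/s^5|
      ≤ ((13/2)*c_ν*d + 9*c_ν*ℓ_ν*d^2 + (17091/2)*c_ν^2*d^2)*h/r^4 := by
    have e : B₁/r^5 - B₂/s^5 = (B₁-B₂)/r^5 + B₂*((s^5-r^5)/(r^5*s^5)) := by
      field_simp; ring
    have termB1 : (h * (c_ν * r^2) + ((9/4)*c_ν*r^2) * (ℓ_ν * h * r + h))/r^5
        ≤ ((13/2)*c_ν*d + 9*c_ν*ℓ_ν*d^2)*h/r^4 := by
      rw [div_le_div_iff₀ (by positivity) (by positivity)]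
      have hr2 : r^2 ≤ 4*d^2 := by nlinarith
      have k1 : (13/4)*c_ν*h*r^5 * r ≤ (13/4)*c_ν*h*r^5 * (2*d) :=
        mul_le_mul_of_nonneg_left hrd (by positivity)
      have k2 : (9/4)*c_ν*ℓ_ν*h*r^5 * r^2 ≤ (9/4)*c_ν*ℓ_ν*h*r^5 * (4*d^2) :=
        mul_le_mul_of_nonneg_left hr2 (by positivity)
      nlinarith [k1, k2]
    have termB2 : (c_ν^2*((81/16)*r^4)) * (((211/16)*h*r^4)/(r^10/32))
        ≤ (17091/2)*c_ν^2*d^2*h/r^4 := by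
      have eL : (c_ν^2*((81/16)*r^4)) * (((211/16)*h*r^4)/(r^10/32))
          = (17091/8)*c_ν^2*h/r^2 := by
        field_simp; ring
      rw [eL, div_le_div_iff₀ (by positivity) (by positivity)]
      have hr2 : r^2 ≤ 4*d^2 := by nlinarith
      nlinarith [mul_le_mul_of_nonneg_left hr2
        (by positivity : (0:ℝ) ≤ (17091/8)*c_ν^2*h*r^2)]
    calc |B₁/r^5 - B₂/s^5| = |(B₁-B₂)/r^5 + B₂*((s^5-r^5)/(r^5*s^5))| := by rw [e]
      _ ≤ |(B₁-B₂)/r^5| + |B₂*((s^5-r^5)/(r^5*s^5))| := abs_add_le _ _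
      _ = |B₁-B₂|/r^5 + |B₂| * (|s^5-r^5|/(r^5*s^5)) := by
          rw [abs_div, abs_mul, abs_div,
            abs_of_pos (by positivity : (0:ℝ) < r^5),
            abs_of_pos (by positivity : (0:ℝ) < r^5*s^5)]
      _ ≤ (h * (c_ν * r^2) + ((9/4)*c_ν*r^2) * (ℓ_ν * h * r + h))/r^5
          + (c_ν^2*((81/16)*r^4)) * (((211/16)*h*r^4)/(r^10/32)) := by
          gcongr
          · refine hBd.trans ?_
            have hsq : s^2 ≤ (9/4)*r^2 := by
              nlinarith [mul_le_mul hs2 hs2 hs0.le (by linarith : (0:ℝ) ≤ 3/2*r)]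
            have hcs : c_ν * s^2 ≤ (9/4)*c_ν*r^2 := by
              nlinarith [mul_le_mul_of_nonneg_left hsq hc.le]
            have hX : (0:ℝ) ≤ ℓ_ν * h * r + h := by positivity
            linarith [mul_le_mul_of_nonneg_right hcs hX]
          · refine hB2b.trans ?_
            have k := mul_le_mul_of_nonneg_left (pow_le_pow_left₀ hs0.le hs2 4)
              (by positivity : (0:ℝ) ≤ c_ν^2)
            nlinarith [k]
      _ ≤ ((13/2)*c_ν*d + 9*c_ν*ℓ_ν*d^2)*h/r^4 + (17091/2)*c_ν^2*d^2*h/r^4 :=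
          add_le_add termB1 termB2
      _ = ((13/2)*c_ν*d + 9*c_ν*ℓ_ν*d^2 + (17091/2)*c_ν^2*d^2)*h/r^4 := by ring
  -- combine
  have hπ1 : 1/(4*Real.pi) ≤ 1 := by
    rw [div_le_one (by positivity)]
    nlinarith [Real.pi_gt_three]
  calc |(1/(4*Real.pi)) * ((A₁/r^3 - A₂/s^3) - 3*(B₁/r^5 - B₂/s^5))|
      = (1/(4*Real.pi)) * |(A₁/r^3 - A₂/s^3) - 3*(B₁/r^5 - B₂/s^5)| := by
        rw [abs_mul, abs_of_pos (by positivity : (0:ℝ) < 1/(4*Real.pi))]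
    _ ≤ 1 * |(A₁/r^3 - A₂/s^3) - 3*(B₁/r^5 - B₂/s^5)| :=
        mul_le_mul_of_nonneg_right hπ1 (abs_nonneg _)
    _ = |(A₁/r^3 - A₂/s^3) - 3*(B₁/r^5 - B₂/s^5)| := one_mul _
    _ ≤ |A₁/r^3 - A₂/s^3| + 3 * |B₁/r^5 - B₂/s^5| := by
        refine (abs_sub _ _).trans ?_
        rw [abs_mul]
        simp
    _ ≤ (2*d*ℓ_ν + 38)*h/r^4
        + 3*(((13/2)*c_ν*d + 9*c_ν*ℓ_ν*d^2 + (17091/2)*c_ν^2*d^2)*h/r^4) := by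
        gcongr
    _ = (2*d*ℓ_ν + 38 + 3*((13/2)*c_ν*d + 9*c_ν*ℓ_ν*d^2 + (17091/2)*c_ν^2*d^2))*h/r^4 := by
        ring
end
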